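/- arXiv:2408.11575 — 4 statements merged into one kernel-verified Lean document; each statement's English description precedes it below -/
import Mathlib

section
/- Let n be a positive natural number, let c ∈ ℝ and g, h ∈ ℝⁿ, and let ω be the alternating bilinear form on V = ℝ × ℝⁿ × ℝⁿ defined by ω((a,u,α),(b,v,β)) = (c·a + ⟨g,u⟩ + ⟨h,α⟩)·b − (c·b + ⟨g,v⟩ + ⟨h,β⟩)·a − (⟨α,v⟩ − ⟨β,u⟩). Then the kernel of ω, i.e. {X ∈ V : ω(X,Z) = 0 for all Z ∈ V}, is exactly the one-dimensional subspace spanned by the vector (1, h, −g); in particular, the unique element of this kernel whose first component equals 1 is (1, h, −g). -/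
/-- The alternating bilinear form `ω` on `V = ℝ × ℝⁿ × ℝⁿ`,
the value of `dΘ = dℋ∧dt − d℘ᵢ∧dyⁱ` at a point, where `c, g, h` are the
partial derivatives of `ℋ`. -/
def omegaForm (n : ℕ) (c : ℝ) (g h : Fin n → ℝ)
    (X Z : ℝ × (Fin n → ℝ) × (Fin n → ℝ)) : ℝ :=
  (c * X.1 + ∑ i, g i * X.2.1 i + ∑ i, h i * X.2.2 i) * Z.1
    - (c * Z.1 + ∑ i, g i * Z.2.1 i + ∑ i, h i * Z.2.2 i) * X.1
    - ((∑ i, X.2.2 i * Z.2.1 i) - (∑ i, Z.2.2 i * X.2.1 i))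

lemma omega_smul_zero (n : ℕ) (c : ℝ) (g h : Fin n → ℝ) (a : ℝ)
    (Z : ℝ × (Fin n → ℝ) × (Fin n → ℝ)) :
    omegaForm n c g h (a • ((1 : ℝ), h, -g)) Z = 0 := by
  have key : ∀ (p q : Fin n → ℝ), ∑ i, p i * (a * q i) = a * ∑ i, p i * q i := by
    intro p q
    rw [Finset.mul_sum]
    exact Finset.sum_congr rfl (fun i _ => by ring)
  have key2 : ∀ (p q : Fin n → ℝ), ∑ i, (a * p i) * q i = a * ∑ i, p i * q i := by
    intro p q
    rw [Finset.mul_sum]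
    exact Finset.sum_congr rfl (fun i _ => by ring)
  simp only [omegaForm, Prod.smul_fst, Prod.smul_snd, Pi.smul_apply, Pi.neg_apply,
    smul_eq_mul, mul_neg, neg_mul, Finset.sum_neg_distrib, key, key2]
  have e1 : ∑ i, h i * g i = ∑ i, g i * h i :=
    Finset.sum_congr rfl (fun i _ => mul_comm _ _)
  have e2 : ∑ i, Z.2.2 i * h i = ∑ i, h i * Z.2.2 i :=
    Finset.sum_congr rfl (fun i _ => mul_comm _ _)
  rw [e1, e2]; ring

/-- The kernel of `ω` is exactly the one-dimensional subspace spanned by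
`(1, h, −g)`; in particular the unique kernel element with first component `1`
is `(1, h, -g)`. -/
theorem stmt_0 (n : ℕ) (hn : 0 < n) (c : ℝ) (g h : Fin n → ℝ) :
    ({X : ℝ × (Fin n → ℝ) × (Fin n → ℝ) | ∀ Z, omegaForm n c g h X Z = 0}
        = ↑(Submodule.span ℝ {(((1 : ℝ), h, -g) : ℝ × (Fin n → ℝ) × (Fin n → ℝ))})) ∧
    (∀ X : ℝ × (Fin n → ℝ) × (Fin n → ℝ),
        (∀ Z, omegaForm n c g h X Z = 0) → X.1 = 1 → X = (1, h, -g)) := by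
  have fwd : ∀ X : ℝ × (Fin n → ℝ) × (Fin n → ℝ),
      (∀ Z, omegaForm n c g h X Z = 0) → X = X.1 • ((1 : ℝ), h, -g) := by
    intro X hX
    obtain ⟨a, u, α⟩ := X
    have hu : ∀ j, u j = a * h j := by
      intro j
      have := hX (0, 0, Pi.single j 1)
      simp only [omegaForm, Pi.single_apply, Pi.zero_apply, mul_zero, zero_mul,
        mul_ite, mul_one, Finset.sum_ite_eq', Finset.mem_univ, ite_true,
        ite_mul, one_mul, Finset.sum_add_distrib, Finset.sum_const_zero] at this
      nlinarith [this]
    have hα : ∀ j, α j = -(a * g j) := by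
      intro j
      have := hX (0, Pi.single j 1, 0)
      simp only [omegaForm, Pi.single_apply, Pi.zero_apply, mul_zero, zero_mul,
        mul_ite, mul_one, Finset.sum_ite_eq', Finset.mem_univ, ite_true,
        ite_mul, one_mul, Finset.sum_add_distrib, Finset.sum_const_zero] at this
      nlinarith [this]
    have h2 : u = a • h := funext fun j => by simp [hu j]
    have h3 : α = a • (-g) := funext fun j => by simp [hα j]
    simp [Prod.ext_iff, h2, h3]
  refine ⟨?_, ?_⟩
  · ext X
    simp only [Set.mem_setOf_eq, SetLike.mem_coe, Submodule.mem_span_singleton]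
    constructor
    · intro hX
      exact ⟨X.1, (fwd X hX).symm⟩
    · rintro ⟨a, rfl⟩ Z
      exact omega_smul_zero n c g h a Z
  · intro X hX h1
    have := fwd X hX
    rw [h1, one_smul] at this
    exact this
end

section
/- Let n be a positive natural number, c, H₀ ∈ ℝ and g, h, w ∈ ℝⁿ. Let ω be the alternating bilinear form on V = ℝ × ℝⁿ × ℝⁿ defined by ω((a,u,α),(b,v,β)) = (c·a + ⟨g,u⟩ + ⟨h,α⟩)·b − (c·b + ⟨g,v⟩ + ⟨h,β⟩)·a − (⟨α,v⟩ − ⟨β,u⟩), and let θ be the linear functional θ(b,v,β) = H₀·b − ⟨w,v⟩. Set ε = ⟨w,h⟩ − H₀ and assume ε ≠ 0. Then there exists a unique X ∈ V satisfying ω(X,Z) = 0 for all Z ∈ V and θ(X) = −ε, namely X = (1, h, −g). -/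
/-- The linear functional `θ(b,v,β) = H₀·b − ⟨w,v⟩`, the value of the
contact 1-form `Θ = ℋ dt − ℘ᵢ dyⁱ` at a point. -/
def thetaForm (n : ℕ) (H₀ : ℝ) (w : Fin n → ℝ)
    (Z : ℝ × (Fin n → ℝ) × (Fin n → ℝ)) : ℝ :=
  H₀ * Z.1 - ∑ i, w i * Z.2.1 i

/-- If `ε = ⟨w,h⟩ − H₀ ≠ 0`, then there is a unique `X` with `ω(X,·) = 0` and
`θ(X) = −ε`, namely `X = (1, h, −g)`. -/
theorem stmt_1 (n : ℕ) (hn : 0 < n) (c H₀ : ℝ) (g h w : Fin n → ℝ)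
    (hε : (∑ i, w i * h i) - H₀ ≠ 0) :
    ∀ X : ℝ × (Fin n → ℝ) × (Fin n → ℝ),
      ((∀ Z, omegaForm n c g h X Z = 0) ∧
        thetaForm n H₀ w X = -((∑ i, w i * h i) - H₀))
      ↔ X = (1, h, -g) := by
  intro X
  obtain ⟨a, u, α⟩ := X
  constructor
  · rintro ⟨hω, hθ⟩
    have hu : ∀ j, u j = a * h j := by
      intro j
      have := hω (0, 0, Pi.single j 1)
      simp [omegaForm, Pi.single_apply, mul_ite, Finset.sum_ite_eq'] at this
      linarith
    have hα : ∀ j, α j = -(a * g j) := by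
      intro j
      have := hω (0, Pi.single j 1, 0)
      simp [omegaForm, Pi.single_apply, mul_ite, Finset.sum_ite_eq'] at this
      linarith
    have hsum : ∑ i, w i * u i = a * ∑ i, w i * h i := by
      rw [Finset.mul_sum]
      exact Finset.sum_congr rfl fun i _ => by rw [hu i]; ring
    have ha : a = 1 := by
      simp only [thetaForm, hsum] at hθ
      have h0 : (a - 1) * ((∑ i, w i * h i) - H₀) = 0 := by ring_nf; ring_nf at hθ; linarith
      rcases mul_eq_zero.1 h0 with h1 | h2
      · linarith
      · exact absurd h2 hε
    subst ha
    refine Prod.ext rfl (Prod.ext ?_ ?_) <;> funext j <;> simp [hu j, hα j]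
  · intro hX
    rw [Prod.mk.injEq, Prod.mk.injEq] at hX
    obtain ⟨rfl, rfl, rfl⟩ := hX
    constructor
    · intro Z
      obtain ⟨b, v, β⟩ := Z
      have e1 : ∑ i, u i * g i = ∑ i, g i * u i :=
        Finset.sum_congr rfl fun i _ => mul_comm _ _
      have e2 : ∑ i, β i * u i = ∑ i, u i * β i :=
        Finset.sum_congr rfl fun i _ => mul_comm _ _
      simp only [omegaForm, Pi.neg_apply, neg_mul, mul_neg, Finset.sum_neg_distrib, e1, e2]
      ring
    · simp [thetaForm]
end

section
/- Let n be a positive natural number, c, H₀ ∈ ℝ and g, h, w ∈ ℝⁿ. Let ω be the alternating bilinear form on V = ℝ × ℝⁿ × ℝⁿ defined by ω((a,u,α),(b,v,β)) = (c·a + ⟨g,u⟩ + ⟨h,α⟩)·b − (c·b + ⟨g,v⟩ + ⟨h,β⟩)·a − (⟨α,v⟩ − ⟨β,u⟩), and let θ be the linear functional θ(b,v,β) = H₀·b − ⟨w,v⟩. If ε = ⟨w,h⟩ − H₀ ≠ 0, then V decomposes as the direct sum V = ker θ ⊕ ker ω, where ker θ = {X ∈ V : θ(X) = 0} and ker ω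 = {X ∈ V : ω(X,Z) = 0 for all Z ∈ V}; that is, these two subspaces intersect trivially and together span V. -/
lemma sum_mul_pull {n : ℕ} (t : ℝ) (f k : Fin n → ℝ) :
    ∑ i, f i * (t * k i) = t * ∑ i, f i * k i := by
  rw [Finset.mul_sum]
  exact Finset.sum_congr rfl (fun i _ => by ring)

/-- If `ε = ⟨w,h⟩ − H₀ ≠ 0`, then `V = ker θ ⊕ ker ω`: the two subspaces
intersect trivially and together span `V`. -/
theorem stmt_2 (n : ℕ) (hn : 0 < n) (c H₀ : ℝ) (g h w : Fin n → ℝ)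
    (hε : (∑ i, w i * h i) - H₀ ≠ 0) :
    (∀ X : ℝ × (Fin n → ℝ) × (Fin n → ℝ),
        thetaForm n H₀ w X = 0 → (∀ Z, omegaForm n c g h X Z = 0) → X = 0) ∧
    (∀ X : ℝ × (Fin n → ℝ) × (Fin n → ℝ),
        ∃ Y Z : ℝ × (Fin n → ℝ) × (Fin n → ℝ),
          thetaForm n H₀ w Y = 0 ∧ (∀ W, omegaForm n c g h Z W = 0) ∧
          X = Y + Z) := by
  constructor
  · rintro ⟨a, u, α⟩ hθ hω
    have hu : ∀ j, u j = a * h j := by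
      intro j
      have := hω (0, 0, fun i => if i = j then 1 else 0)
      simp [omegaForm, Finset.mul_sum, mul_ite, Finset.sum_ite_eq'] at this
      linarith
    have ha : a = 0 := by
      have hθ' : H₀ * a - ∑ i, w i * u i = 0 := hθ
      have : ∑ i, w i * u i = a * ∑ i, w i * h i := by
        rw [Finset.mul_sum]
        exact Finset.sum_congr rfl (fun i _ => by rw [hu i]; ring)
      rw [this] at hθ'
      have : a * ((∑ i, w i * h i) - H₀) = 0 := by linarith
      rcases mul_eq_zero.mp this with h' | h'
      · exact h'
      · exact absurd h' hε
    have hα : ∀ j, α j = 0 := by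
      intro j
      have := hω (0, fun i => if i = j then 1 else 0, 0)
      simp [omegaForm, Finset.mul_sum, mul_ite, Finset.sum_ite_eq', ha] at this
      linarith
    refine Prod.ext ha (Prod.ext ?_ ?_) <;> funext j
    · simp [hu j, ha]
    · simp [hα j]
  · intro X
    set ε : ℝ := (∑ i, w i * h i) - H₀ with hεdef
    set t : ℝ := (thetaForm n H₀ w X) / (-ε) with htdef
    refine ⟨X - (t, fun i => t * h i, fun i => -(t * g i)),
      (t, fun i => t * h i, fun i => -(t * g i)), ?_, ?_, by abel⟩
    · show H₀ * (X.1 - t) - ∑ i, w i * (X.2.1 i - t * h i) = 0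
      have hsub : ∑ i, w i * (X.2.1 i - t * h i)
          = (∑ i, w i * X.2.1 i) - t * ∑ i, w i * h i := by
        have h1 : ∑ i, w i * (X.2.1 i - t * h i)
            = ∑ i, (w i * X.2.1 i - t * (w i * h i)) :=
          Finset.sum_congr rfl (fun i _ => by ring)
        rw [h1, Finset.sum_sub_distrib, ← Finset.mul_sum]
      rw [hsub]
      have ht : t * (-ε) = thetaForm n H₀ w X := by
        rw [htdef, div_mul_cancel₀]
        simpa using hε
      have : thetaForm n H₀ w X = H₀ * X.1 - ∑ i, w i * X.2.1 i := rfl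
      rw [this] at ht
      have hexp : t * (-ε) = t * H₀ - t * ∑ i, w i * h i := by
        rw [hεdef]; ring
      rw [hexp] at ht
      linarith
    · intro W
      show (c * t + (∑ i, g i * (t * h i)) + ∑ i, h i * (-(t * g i))) * W.1
          - (c * W.1 + (∑ i, g i * W.2.1 i) + ∑ i, h i * W.2.2 i) * t
          - ((∑ i, (-(t * g i)) * W.2.1 i) - ∑ i, W.2.2 i * (t * h i)) = 0
      have e1 : ∑ i, g i * (t * h i) = t * ∑ i, g i * h i := sum_mul_pull t g h
      have e2 : ∑ i, h i * (-(t * g i)) = -(t * ∑ i, g i * h i) := by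
        have h1 : ∑ i, h i * (-(t * g i)) = ∑ i, (-t) * (g i * h i) :=
          Finset.sum_congr rfl (fun i _ => by ring)
        rw [h1, ← Finset.mul_sum]; ring
      have e3 : ∑ i, (-(t * g i)) * W.2.1 i = -(t * ∑ i, g i * W.2.1 i) := by
        have h1 : ∑ i, (-(t * g i)) * W.2.1 i = ∑ i, (-t) * (g i * W.2.1 i) :=
          Finset.sum_congr rfl (fun i _ => by ring)
        rw [h1, ← Finset.mul_sum]; ring
      have e4 : ∑ i, W.2.2 i * (t * h i) = t * ∑ i, h i * W.2.2 i := by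
        have h1 : ∑ i, W.2.2 i * (t * h i) = ∑ i, t * (h i * W.2.2 i) :=
          Finset.sum_congr rfl (fun i _ => by ring)
        rw [h1, ← Finset.mul_sum]
      rw [e1, e2, e3, e4]; ring
end

section
/- Let n be a positive natural number, t₀ < t₁ real numbers, and H : ℝ × ℝⁿ × ℝⁿ → ℝ continuously differentiable with partial derivatives ∂ₜH, ∇_yH, ∇_℘H. Let y, ℘ : [t₀,t₁] → ℝⁿ be continuously differentiable and satisfy the contact dynamical equations y'(t) = ∇_℘H(t, y(t), ℘(t)) and ℘'(t) = −∇_yH(t, y(t), ℘(t)) on [t₀,t₁]. Then for every pair of continuously differentiable variations δy, δ℘ : [t₀,t₁] → ℝⁿ with δy(t₀) = δy(t₁) = 0, the function S(s) = ∫_{t₀}^{t₁} ( ⟨℘(t) + s·δ℘(t), y'(t) + s·δy'(t)⟩ − H(t, y(t) + s·δy(t), ℘(t) + s·δ℘(t)) ) dt is differentiable at s = 0 with S'(0) = 0. -/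
open intervalIntegral

/-- Least constraint theorem, forward direction (Lemma 3 / Theorem 1(iii)):
along solutions of the contact dynamical equations `y' = ∇_℘H`,
`℘' = −∇_yH`, every variation with fixed endpoints of the constraint action
`S(s) = ∫ (⟨℘+sδ℘, y'+sδy'⟩ − H(t, y+sδy, ℘+sδ℘)) dt` satisfies `S'(0) = 0`. -/
theorem stmt_10 (n : ℕ) (hn : 0 < n) (t₀ t₁ : ℝ) (hlt : t₀ < t₁)
    (H : ℝ × (Fin n → ℝ) × (Fin n → ℝ) → ℝ)
    (H' : ℝ × (Fin n → ℝ) × (Fin n → ℝ) →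
      (ℝ × (Fin n → ℝ) × (Fin n → ℝ)) →L[ℝ] ℝ)
    (Ht : ℝ × (Fin n → ℝ) × (Fin n → ℝ) → ℝ)
    (Hy Hp : ℝ × (Fin n → ℝ) × (Fin n → ℝ) → Fin n → ℝ)
    (hH : ∀ x, HasFDerivAt H (H' x) x)
    (hH' : ∀ x (b : ℝ) (v β : Fin n → ℝ),
      H' x (b, v, β) = Ht x * b + ∑ i, Hy x i * v i + ∑ i, Hp x i * β i)
    (hHt : Continuous Ht) (hHy : Continuous Hy) (hHp : Continuous Hp)
    (y ℘ y' ℘' : ℝ → Fin n → ℝ)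
    (hy : ∀ t ∈ Set.Icc t₀ t₁, HasDerivAt y (y' t) t)
    (h℘ : ∀ t ∈ Set.Icc t₀ t₁, HasDerivAt ℘ (℘' t) t)
    (hy' : ContinuousOn y' (Set.Icc t₀ t₁))
    (h℘' : ContinuousOn ℘' (Set.Icc t₀ t₁))
    (heq1 : ∀ t ∈ Set.Icc t₀ t₁, y' t = Hp (t, y t, ℘ t))
    (heq2 : ∀ t ∈ Set.Icc t₀ t₁, ℘' t = -Hy (t, y t, ℘ t)) :
    ∀ δy δ℘ δy' δ℘' : ℝ → Fin n → ℝ,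
      (∀ t ∈ Set.Icc t₀ t₁, HasDerivAt δy (δy' t) t) →
      (∀ t ∈ Set.Icc t₀ t₁, HasDerivAt δ℘ (δ℘' t) t) →
      ContinuousOn δy' (Set.Icc t₀ t₁) →
      ContinuousOn δ℘' (Set.Icc t₀ t₁) →
      δy t₀ = 0 → δy t₁ = 0 →
      HasDerivAt
        (fun s : ℝ => ∫ t in t₀..t₁,
          ((∑ i, (℘ t i + s * δ℘ t i) * (y' t i + s * δy' t i))
            - H (t, y t + s • δy t, ℘ t + s • δ℘ t)))
        0 0 := by
  intro δy δ℘ δy' δ℘' hδy hδ℘ hδy' hδ℘' hb0 hb1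
  have hle : t₀ ≤ t₁ := hlt.le
  have hIoc : Set.uIoc t₀ t₁ = Set.Ioc t₀ t₁ := Set.uIoc_of_le hle
  have hIcc : Set.uIcc t₀ t₁ = Set.Icc t₀ t₁ := Set.uIcc_of_le hle
  have hsubI : Set.uIoc t₀ t₁ ⊆ Set.Icc t₀ t₁ := by
    rw [hIoc]; exact Set.Ioc_subset_Icc_self
  -- continuity of the base curves
  have hyc : ContinuousOn y (Set.Icc t₀ t₁) :=
    fun t ht => ((hy t ht).continuousAt).continuousWithinAt
  have hpc : ContinuousOn ℘ (Set.Icc t₀ t₁) :=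
    fun t ht => ((h℘ t ht).continuousAt).continuousWithinAt
  have hδyc : ContinuousOn δy (Set.Icc t₀ t₁) :=
    fun t ht => ((hδy t ht).continuousAt).continuousWithinAt
  have hδpc : ContinuousOn δ℘ (Set.Icc t₀ t₁) :=
    fun t ht => ((hδ℘ t ht).continuousAt).continuousWithinAt
  have hHc : Continuous H := continuous_iff_continuousAt.mpr fun x => (hH x).continuousAt
  -- the integrand and its s-derivative
  set Φ : ℝ → ℝ → ℝ × (Fin n → ℝ) × (Fin n → ℝ) := fun s t =>
    (t, y t + s • δy t, ℘ t + s • δ℘ t) with hΦdef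
  set F : ℝ → ℝ → ℝ := fun s t =>
    (∑ i, (℘ t i + s * δ℘ t i) * (y' t i + s * δy' t i)) - H (Φ s t) with hFdef
  set F' : ℝ → ℝ → ℝ := fun s t =>
    (∑ i, (δ℘ t i * (y' t i + s * δy' t i) + (℘ t i + s * δ℘ t i) * δy' t i))
      - ((∑ i, Hy (Φ s t) i * δy t i) + ∑ i, Hp (Φ s t) i * δ℘ t i) with hF'def
  -- two-variable continuity helpers
  have hmaps : ∀ (U : Set ℝ), Set.MapsTo (fun p : ℝ × ℝ => p.2) (U ×ˢ Set.Icc t₀ t₁)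
      (Set.Icc t₀ t₁) := fun U p hp => hp.2
  have key : ∀ (U : Set ℝ) {f : ℝ → Fin n → ℝ}, ContinuousOn f (Set.Icc t₀ t₁) →
      ∀ i, ContinuousOn (fun p : ℝ × ℝ => f p.2 i) (U ×ˢ Set.Icc t₀ t₁) := by
    intro U f hf i
    exact (continuous_apply i).comp_continuousOn
      (hf.comp continuous_snd.continuousOn (hmaps U))
  have key2 : ∀ (U : Set ℝ) {f : ℝ → Fin n → ℝ}, ContinuousOn f (Set.Icc t₀ t₁) →
      ContinuousOn (fun p : ℝ × ℝ => f p.2) (U ×ˢ Set.Icc t₀ t₁) :=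
    fun U f hf => hf.comp continuous_snd.continuousOn (hmaps U)
  have hΦc : ∀ (U : Set ℝ), ContinuousOn (fun p : ℝ × ℝ => Φ p.1 p.2)
      (U ×ˢ Set.Icc t₀ t₁) := by
    intro U
    exact continuous_snd.continuousOn.prodMk
      (((key2 U hyc).add (continuous_fst.continuousOn.smul (key2 U hδyc))).prodMk
        ((key2 U hpc).add (continuous_fst.continuousOn.smul (key2 U hδpc))))
  have hF'c : ∀ (U : Set ℝ), ContinuousOn (fun p : ℝ × ℝ => F' p.1 p.2)
      (U ×ˢ Set.Icc t₀ t₁) := by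
    intro U
    apply ContinuousOn.sub
    · apply continuousOn_finset_sum
      intro i _
      exact ((key U hδpc i).mul ((key U hy' i).add
          (continuous_fst.continuousOn.mul (key U hδy' i)))).add
        (((key U hpc i).add (continuous_fst.continuousOn.mul (key U hδpc i))).mul
          (key U hδy' i))
    · apply ContinuousOn.add
      · apply continuousOn_finset_sum
        intro i _
        exact (((continuous_apply i).comp hHy).comp_continuousOn (hΦc U)).mul (key U hδyc i)
      · apply continuousOn_finset_sum
        intro i _
        exact (((continuous_apply i).comp hHp).comp_continuousOn (hΦc U)).mul (key U hδpc i)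
  have hFc : ∀ (U : Set ℝ), ContinuousOn (fun p : ℝ × ℝ => F p.1 p.2)
      (U ×ˢ Set.Icc t₀ t₁) := by
    intro U
    apply ContinuousOn.sub
    · apply continuousOn_finset_sum
      intro i _
      exact ((key U hpc i).add (continuous_fst.continuousOn.mul (key U hδpc i))).mul
        ((key U hy' i).add (continuous_fst.continuousOn.mul (key U hδy' i)))
    · exact hHc.comp_continuousOn (hΦc U)
  -- slice continuity
  have hFslice : ∀ s : ℝ, ContinuousOn (F s) (Set.Icc t₀ t₁) := by
    intro s
    have : ContinuousOn ((fun p : ℝ × ℝ => F p.1 p.2) ∘ fun t => (s, t)) (Set.Icc t₀ t₁) :=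
      (hFc Set.univ).comp ((continuous_const.prodMk continuous_id).continuousOn)
        (fun t ht => ⟨trivial, ht⟩)
    exact this
  have hF'slice : ∀ s : ℝ, ContinuousOn (F' s) (Set.Icc t₀ t₁) := by
    intro s
    have : ContinuousOn ((fun p : ℝ × ℝ => F' p.1 p.2) ∘ fun t => (s, t)) (Set.Icc t₀ t₁) :=
      (hF'c Set.univ).comp ((continuous_const.prodMk continuous_id).continuousOn)
        (fun t ht => ⟨trivial, ht⟩)
    exact this
  -- the bound on the compact set
  obtain ⟨C, hC⟩ : ∃ C, ∀ p ∈ (Set.Icc (-1 : ℝ) 1) ×ˢ Set.Icc t₀ t₁,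
      ‖(fun p : ℝ × ℝ => F' p.1 p.2) p‖ ≤ C :=
    (isCompact_Icc.prod isCompact_Icc).exists_bound_of_continuousOn (hF'c _)
  -- pointwise differentiability in s
  have hdiff : ∀ t ∈ Set.Icc t₀ t₁, ∀ x : ℝ, HasDerivAt (fun s => F s t) (F' x t) x := by
    intro t ht x
    have hsmul : ∀ v : Fin n → ℝ, HasDerivAt (fun s : ℝ => s • v) v x := by
      intro v; simpa using (hasDerivAt_id x).smul_const v
    have hΦd : HasDerivAt (fun s => Φ s t) ((0 : ℝ), δy t, δ℘ t) x :=
      (hasDerivAt_const x t).prodMk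
        (((hsmul (δy t)).const_add (y t)).prodMk ((hsmul (δ℘ t)).const_add (℘ t)))
    have hHd : HasDerivAt (fun s => H (Φ s t)) (H' (Φ x t) ((0 : ℝ), δy t, δ℘ t)) x :=
      (hH (Φ x t)).comp_hasDerivAt x hΦd
    have hS : HasDerivAt (fun s => ∑ i, (℘ t i + s * δ℘ t i) * (y' t i + s * δy' t i))
        (∑ i, (δ℘ t i * (y' t i + x * δy' t i) + (℘ t i + x * δ℘ t i) * δy' t i)) x := by
      apply HasDerivAt.fun_sum
      intro i _
      have h1 : HasDerivAt (fun s : ℝ => ℘ t i + s * δ℘ t i) (δ℘ t i) x := by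
        simpa using ((hasDerivAt_id x).mul_const (δ℘ t i)).const_add (℘ t i)
      have h2 : HasDerivAt (fun s : ℝ => y' t i + s * δy' t i) (δy' t i) x := by
        simpa using ((hasDerivAt_id x).mul_const (δy' t i)).const_add (y' t i)
      simpa using h1.fun_mul h2
    have heqF' : F' x t =
        (∑ i, (δ℘ t i * (y' t i + x * δy' t i) + (℘ t i + x * δ℘ t i) * δy' t i))
          - H' (Φ x t) ((0 : ℝ), δy t, δ℘ t) := by
      rw [hH']; simp [hF'def]
    rw [heqF']
    exact hS.sub hHd
  -- apply the dominated differentiation theorem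
  have main := intervalIntegral.hasDerivAt_integral_of_dominated_loc_of_deriv_le
    (μ := MeasureTheory.volume) (F := F) (F' := F') (a := t₀) (b := t₁) (x₀ := (0 : ℝ)) (bound := fun _ => C)
    (s := Metric.ball (0 : ℝ) 1) (Metric.ball_mem_nhds 0 one_pos)
    (Filter.Eventually.of_forall fun s =>
      ((hFslice s).mono hsubI).aestronglyMeasurable measurableSet_uIoc)
    (((hFslice 0).mono (by rw [hIcc])).intervalIntegrable)
    (((hF'slice 0).mono hsubI).aestronglyMeasurable measurableSet_uIoc)
    (Filter.Eventually.of_forall fun t ht x hx => by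
      have hx' : x ∈ Set.Icc (-1 : ℝ) 1 := by
        have := Metric.mem_ball.mp hx
        rw [Real.dist_eq, sub_zero] at this
        constructor <;> [linarith [abs_le.mp this.le]; linarith [abs_le.mp this.le]]
      exact hC (x, t) ⟨hx', hsubI ht⟩)
    (intervalIntegrable_const)
    (Filter.Eventually.of_forall fun t ht x _ => hdiff t (hsubI ht) x)
  -- compute the derivative integral: it vanishes
  have hgd : ∀ t ∈ Set.Icc t₀ t₁,
      HasDerivAt (fun t => ∑ i, ℘ t i * δy t i)
        (∑ i, (℘' t i * δy t i + ℘ t i * δy' t i)) t := by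
    intro t ht
    apply HasDerivAt.fun_sum
    intro i _
    exact ((hasDerivAt_pi.mp (h℘ t ht)) i).mul ((hasDerivAt_pi.mp (hδy t ht)) i)
  have hg'c : ContinuousOn (fun t => ∑ i, (℘' t i * δy t i + ℘ t i * δy' t i))
      (Set.Icc t₀ t₁) := by
    apply continuousOn_finset_sum
    intro i _
    exact (((continuous_apply i).comp_continuousOn h℘').mul
        ((continuous_apply i).comp_continuousOn hδyc)).add
      (((continuous_apply i).comp_continuousOn hpc).mul
        ((continuous_apply i).comp_continuousOn hδy'))
  have hEq : Set.EqOn (F' 0) (fun t => ∑ i, (℘' t i * δy t i + ℘ t i * δy' t i))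
      (Set.uIcc t₀ t₁) := by
    rw [hIcc]
    intro t ht
    have e2 : Hy (t, y t, ℘ t) = -℘' t := by rw [heq2 t ht]; simp
    have e1 : y' t = Hp (t, y t, ℘ t) := heq1 t ht
    simp only [hF'def, hΦdef, zero_smul, add_zero, zero_mul, e1, e2, Pi.neg_apply,
      neg_mul, Finset.sum_neg_distrib, Finset.sum_add_distrib]
    have : ∑ i, δ℘ t i * Hp (t, y t, ℘ t) i = ∑ i, Hp (t, y t, ℘ t) i * δ℘ t i := by
      simp [mul_comm]
    rw [this]
    ring
  have hzero : (∫ t in t₀..t₁, F' 0 t) = 0 := by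
    rw [intervalIntegral.integral_congr hEq,
      intervalIntegral.integral_eq_sub_of_hasDerivAt
        (fun t ht => hgd t (hIcc ▸ ht))
        ((hg'c.mono (by rw [hIcc])).intervalIntegrable)]
    simp [hb0, hb1]
  have final := main.2
  rw [hzero] at final
  exact final
end
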